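/- If a graph G contains an M-Jposy relative to some maximum matching M, then G is not a König–Egerváry graph. -/

import Mathlib

open SimpleGraph

variable {V : Type*} [DecidableEq V]

/-- `M` is a matching of `G`: a set of edges of `G`, pairwise not sharing a vertex. -/
def IsMatching' (G : SimpleGraph V) (M : Finset (Sym2 V)) : Prop :=
  (↑M : Set (Sym2 V)) ⊆ G.edgeSet ∧
    ∀ e ∈ M, ∀ f ∈ M, e ≠ f → ∀ v : V, ¬(v ∈ e ∧ v ∈ f)

/-- `M` is a maximum matching of `G`. -/
def IsMaxMatching (G : SimpleGraph V) (M : Finset (Sym2 V)) : Prop :=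
  IsMatching' G M ∧ ∀ M' : Finset (Sym2 V), IsMatching' G M' → M'.card ≤ M.card

/-- The vertex `v` is matched (saturated) by `M`. -/
def MatchedBy (M : Finset (Sym2 V)) (v : V) : Prop :=
  ∃ e ∈ M, v ∈ e

/-- A walk is `M`-alternating: consecutive edges alternate between `M` and its complement. -/
def IsAltWalk {G : SimpleGraph V} (M : Finset (Sym2 V)) {u v : V} (w : G.Walk u v) : Prop :=
  w.edges.Chain' (fun e f => e ∈ M ↔ f ∉ M)

/-- The first edge of the walk belongs to `M`. -/
def StartsMatched {G : SimpleGraph V} (M : Finset (Sym2 V)) {u v : V} (w : G.Walk u v) : Prop :=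
  ∃ e, w.edges.head? = some e ∧ e ∈ M

/-- The last edge of the walk belongs to `M`. -/
def EndsMatched {G : SimpleGraph V} (M : Finset (Sym2 V)) {u v : V} (w : G.Walk u v) : Prop :=
  ∃ e, w.edges.getLast? = some e ∧ e ∈ M

/-- The first edge of the walk does not belong to `M`. -/
def StartsUnmatched {G : SimpleGraph V} (M : Finset (Sym2 V)) {u v : V} (w : G.Walk u v) : Prop :=
  ∃ e, w.edges.head? = some e ∧ e ∉ M

/-- The last edge of the walk does not belong to `M`. -/
def EndsUnmatched {G : SimpleGraph V} (M : Finset (Sym2 V)) {u v : V} (w : G.Walk u v) : Prop :=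
  ∃ e, w.edges.getLast? = some e ∧ e ∉ M

/-- An `M`-blossom with base `b`: an odd cycle of length `2k+1` containing exactly `k`
edges of `M`, alternating, whose base `b` is not matched within the cycle. -/
def IsBlossom (G : SimpleGraph V) (M : Finset (Sym2 V)) {b : V} (c : G.Walk b b) : Prop :=
  c.IsCycle ∧ Odd c.length ∧ IsAltWalk M c ∧
    2 * (c.edges.toFinset ∩ M).card + 1 = c.length ∧
    ∀ e ∈ c.edges, e ∈ M → b ∉ e

/-- An `M`-flower: an `M`-blossom with base `b` together with an even `M`-alternating
stem from `b` to an `M`-unmatched vertex `u`, sharing only the base with the blossom. -/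
def IsFlower (G : SimpleGraph V) (M : Finset (Sym2 V)) {b u : V}
    (c : G.Walk b b) (s : G.Walk b u) : Prop :=
  IsBlossom G M c ∧ s.IsPath ∧ Even s.length ∧ IsAltWalk M s ∧
    ¬ MatchedBy M u ∧ ∀ x ∈ s.support, x ∈ c.support → x = b

/-- An `M`-posy: two distinct `M`-blossoms joined by an odd `M`-alternating path
between their bases, starting and ending with matched edges. -/
def IsPosy (G : SimpleGraph V) (M : Finset (Sym2 V)) {b₁ b₂ : V}
    (c₁ : G.Walk b₁ b₁) (c₂ : G.Walk b₂ b₂) (p : G.Walk b₁ b₂) : Prop :=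
  IsBlossom G M c₁ ∧ IsBlossom G M c₂ ∧ (b₁ ≠ b₂ ∨ c₁.edges ≠ c₂.edges) ∧
    p.IsPath ∧ Odd p.length ∧ IsAltWalk M p ∧ StartsMatched M p ∧ EndsMatched M p

/-- An `M`-Tposy: a posy whose connecting path is internally disjoint from both blossoms. -/
def IsTposy (G : SimpleGraph V) (M : Finset (Sym2 V)) {b₁ b₂ : V}
    (c₁ : G.Walk b₁ b₁) (c₂ : G.Walk b₂ b₂) (p : G.Walk b₁ b₂) : Prop :=
  IsPosy G M c₁ c₂ p ∧
    ∀ x ∈ p.support, x ≠ b₁ → x ≠ b₂ → x ∉ c₁.support ∧ x ∉ c₂.support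

/-- An `M`-Jposy: two (not necessarily distinct) `M`-blossoms joined by an odd
`M`-alternating walk between their bases, starting and ending with matched edges. -/
def IsJposy (G : SimpleGraph V) (M : Finset (Sym2 V)) {b₁ b₂ : V}
    (c₁ : G.Walk b₁ b₁) (c₂ : G.Walk b₂ b₂) (w : G.Walk b₁ b₂) : Prop :=
  IsBlossom G M c₁ ∧ IsBlossom G M c₂ ∧
    Odd w.length ∧ IsAltWalk M w ∧ StartsMatched M w ∧ EndsMatched M w

/-- An `M`-Jflower: an `M`-blossom together with an `M`-alternating walk from its base
to an `M`-unmatched vertex. -/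
def IsJflower (G : SimpleGraph V) (M : Finset (Sym2 V)) {b u : V}
    (c : G.Walk b b) (w : G.Walk b u) : Prop :=
  IsBlossom G M c ∧ IsAltWalk M w ∧ ¬ MatchedBy M u

/-- The vertex `x` belongs to some `M`-flower. -/
def InFlower (G : SimpleGraph V) (M : Finset (Sym2 V)) (x : V) : Prop :=
  ∃ (b u : V) (c : G.Walk b b) (s : G.Walk b u),
    IsFlower G M c s ∧ (x ∈ c.support ∨ x ∈ s.support)

/-- The vertex `x` belongs to some `M`-posy. -/
def InPosy (G : SimpleGraph V) (M : Finset (Sym2 V)) (x : V) : Prop :=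
  ∃ (b₁ b₂ : V) (c₁ : G.Walk b₁ b₁) (c₂ : G.Walk b₂ b₂) (p : G.Walk b₁ b₂),
    IsPosy G M c₁ c₂ p ∧ (x ∈ c₁.support ∨ x ∈ c₂.support ∨ x ∈ p.support)

/-- The vertex `x` belongs to some `M`-Tposy. -/
def InTposy (G : SimpleGraph V) (M : Finset (Sym2 V)) (x : V) : Prop :=
  ∃ (b₁ b₂ : V) (c₁ : G.Walk b₁ b₁) (c₂ : G.Walk b₂ b₂) (p : G.Walk b₁ b₂),
    IsTposy G M c₁ c₂ p ∧ (x ∈ c₁.support ∨ x ∈ c₂.support ∨ x ∈ p.support)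

/-- The vertex `x` belongs to some `M`-Jposy. -/
def InJposy (G : SimpleGraph V) (M : Finset (Sym2 V)) (x : V) : Prop :=
  ∃ (b₁ b₂ : V) (c₁ : G.Walk b₁ b₁) (c₂ : G.Walk b₂ b₂) (w : G.Walk b₁ b₂),
    IsJposy G M c₁ c₂ w ∧ (x ∈ c₁.support ∨ x ∈ c₂.support ∨ x ∈ w.support)

/-- The vertex `x` belongs to some `M`-Jflower. -/
def InJflower (G : SimpleGraph V) (M : Finset (Sym2 V)) (x : V) : Prop :=
  ∃ (b u : V) (c : G.Walk b b) (w : G.Walk b u),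
    IsJflower G M c w ∧ (x ∈ c.support ∨ x ∈ w.support)

/-- The independence number of `G`. -/
noncomputable def indepNum (G : SimpleGraph V) : ℕ :=
  sSup {n | ∃ s : Finset V, (∀ u ∈ s, ∀ w ∈ s, ¬ G.Adj u w) ∧ s.card = n}

/-- The matching number of `G`. -/
noncomputable def matchNum (G : SimpleGraph V) : ℕ :=
  sSup {n | ∃ M : Finset (Sym2 V), IsMatching' G M ∧ M.card = n}

/-- `G` is a König–Egerváry graph: `α(G) + μ(G) = |V(G)|`. -/
def IsKE (G : SimpleGraph V) [Fintype V] : Prop :=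
  _root_.indepNum G + matchNum G = Fintype.card V


/-!
If `G` were König–Egerváry, a maximum independent set `S` would satisfy `|S| + |M| = |V|`;
since every edge of `M` has an endpoint outside `S` and these endpoints are distinct, `S`
must contain exactly one endpoint of every edge of `M`. Then along an `M`-alternating walk
on which every vertex outside `S` is left by a matched edge, membership in `S` flips at each
step. A blossom's base cannot lie in `S`, for the odd cycle would return to it outside `S`.
So the odd walk of the Jposy starts outside `S` with a matched edge and must end in `S`,
yet it ends at the base of a blossom.
-/

open Finset

theorem IsMatching'.adj {V : Type*} {G : SimpleGraph V} {M : Finset (Sym2 V)}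
    (hM : IsMatching' G M) {a b : V} (h : s(a, b) ∈ M) : G.Adj a b :=
  G.mem_edgeSet.mp (hM.1 h)

theorem IsMatching'.eq_of_mem_of_mem {V : Type*} {G : SimpleGraph V} {M : Finset (Sym2 V)}
    (hM : IsMatching' G M) {e f : Sym2 V} (he : e ∈ M) (hf : f ∈ M) {v : V} (hve : v ∈ e)
    (hvf : v ∈ f) : e = f := by
  by_contra hne
  exact hM.2 e he f hf hne v ⟨hve, hvf⟩

/-- Choosing for each edge of `M` an endpoint outside `S` is injective, and misses one of the
two endpoints of an edge lying entirely outside `S`. -/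
theorem IsMatching'.card_lt_card_compl {V : Type*} [DecidableEq V] [Fintype V]
    {G : SimpleGraph V} {M : Finset (Sym2 V)} (hM : IsMatching' G M) {S : Finset V}
    (hS : ∀ e ∈ M, ∃ x ∈ e, x ∉ S) {a b : V} (hab : s(a, b) ∈ M) (ha : a ∉ S) (hb : b ∉ S) :
    #M < #Sᶜ := by
  have : Nonempty V := ⟨a⟩
  choose! g hg_mem hg_notMem using hS
  have hinj : Set.InjOn g M := fun e he f hf hef =>
    hM.eq_of_mem_of_mem he hf (hg_mem e he) (hef ▸ hg_mem f hf)
  have hsub : M.image g ⊆ Sᶜ := by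
    intro x hx
    obtain ⟨e, he, rfl⟩ := mem_image.mp hx
    exact mem_compl.mpr (hg_notMem e he)
  have hmiss : ∃ x ∈ Sᶜ, x ∉ M.image g := by
    by_contra! hall
    obtain ⟨e, he, hea⟩ := mem_image.mp (hall a (mem_compl.mpr ha))
    obtain ⟨f, hf, hfb⟩ := mem_image.mp (hall b (mem_compl.mpr hb))
    have he' : e = s(a, b) := hM.eq_of_mem_of_mem he hab (hea ▸ hg_mem e he) (by simp)
    have hf' : f = s(a, b) := hM.eq_of_mem_of_mem hf hab (hfb ▸ hg_mem f hf) (by simp)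
    exact (hM.adj hab).ne (hea.symm.trans (he' ▸ hf' ▸ hfb))
  calc #M = #(M.image g) := (card_image_of_injOn hinj).symm
    _ < #Sᶜ := card_lt_card ((ssubset_iff_of_subset hsub).mpr hmiss)

theorem IsMaxMatching.matchNum_eq {V : Type*} {G : SimpleGraph V} {M : Finset (Sym2 V)}
    (hM : IsMaxMatching G M) : matchNum G = #M := by
  have hbdd : ∀ n ∈ {n | ∃ M' : Finset (Sym2 V), IsMatching' G M' ∧ #M' = n}, n ≤ #M := by
    rintro n ⟨M', hM', rfl⟩
    exact hM.2 M' hM'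
  exact le_antisymm (csSup_le ⟨#M, M, hM.1, rfl⟩ hbdd) (le_csSup ⟨#M, hbdd⟩ ⟨M, hM.1, rfl⟩)

theorem exists_card_eq_indepNum {V : Type*} [Fintype V] (G : SimpleGraph V) :
    ∃ S : Finset V, (∀ u ∈ S, ∀ w ∈ S, ¬ G.Adj u w) ∧ #S = _root_.indepNum G := by
  refine Nat.sSup_mem (s := {n | ∃ S : Finset V, (∀ u ∈ S, ∀ w ∈ S, ¬ G.Adj u w) ∧ #S = n})
    ⟨0, ∅, by simp⟩ ⟨Fintype.card V, ?_⟩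
  rintro n ⟨S, -, rfl⟩
  exact card_le_univ S

theorem IsKE.exists_indep_mem_iff_notMem {V : Type*} [DecidableEq V] [Fintype V]
    {G : SimpleGraph V} {M : Finset (Sym2 V)} (hKE : IsKE G) (hM : IsMaxMatching G M) :
    ∃ S : Finset V, (∀ u ∈ S, ∀ w ∈ S, ¬ G.Adj u w) ∧
      ∀ a b, s(a, b) ∈ M → (a ∈ S ↔ b ∉ S) := by
  obtain ⟨S, hS, hcard⟩ := exists_card_eq_indepNum G
  have hMS : #M = #Sᶜ := by
    have := card_add_card_compl S
    rw [IsKE, hM.matchNum_eq, ← hcard] at hKE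
    omega
  have hleave : ∀ e ∈ M, ∃ x ∈ e, x ∉ S := by
    intro e he
    induction e using Sym2.ind with
    | _ a b =>
      by_cases ha : a ∈ S
      · exact ⟨b, by simp, fun hb => hS a ha b hb (hM.1.adj he)⟩
      · exact ⟨a, by simp, ha⟩
  refine ⟨S, hS, fun a b hab => ⟨fun ha hb => hS a ha b hb (hM.1.adj hab), fun hb => ?_⟩⟩
  by_contra ha
  exact (hM.1.card_lt_card_compl hleave hab ha hb).ne hMS

theorem SimpleGraph.Walk.start_mem_of_mem_edges_head? {V : Type*} {G : SimpleGraph V} {u v : V}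
    {w : G.Walk u v} {e : Sym2 V} (he : e ∈ w.edges.head?) : u ∈ e := by
  cases w <;> aesop

theorem mem_iff_notMem_of_adj {V : Type*} {G : SimpleGraph V} {M : Finset (Sym2 V)}
    {S : Finset V} (hS : ∀ u ∈ S, ∀ w ∈ S, ¬ G.Adj u w)
    (hMS : ∀ a b, s(a, b) ∈ M → (a ∈ S ↔ b ∉ S)) {u x : V} (hux : G.Adj u x)
    (he : s(u, x) ∈ M ↔ u ∉ S) : x ∈ S ↔ u ∉ S := by
  by_cases hu : u ∈ S
  · simpa [hu] using fun hx => hS u hu x hx hux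
  · have := hMS u x (he.mpr hu)
    tauto

/-- The invariant "the edge leaving a vertex is matched iff the vertex is outside `S`" propagates
along an alternating walk, and membership in `S` flips at every step. -/
theorem IsAltWalk.mem_iff_even_length {V : Type*} {G : SimpleGraph V} {M : Finset (Sym2 V)}
    {S : Finset V} (hS : ∀ u ∈ S, ∀ w ∈ S, ¬ G.Adj u w)
    (hMS : ∀ a b, s(a, b) ∈ M → (a ∈ S ↔ b ∉ S)) {u v : V} {w : G.Walk u v}
    (halt : IsAltWalk M w) (hhead : ∀ e ∈ w.edges.head?, (e ∈ M ↔ u ∉ S)) :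
    v ∈ S ↔ (u ∈ S ↔ Even w.length) := by
  induction w with
  | nil => simp
  | @cons u x v hux w ih =>
    rw [IsAltWalk, SimpleGraph.Walk.edges_cons, List.Chain', List.isChain_cons] at halt
    obtain ⟨hrel, htail⟩ := halt
    have he : s(u, x) ∈ M ↔ u ∉ S := hhead _ (by simp)
    have hx := mem_iff_notMem_of_adj hS hMS hux he
    have ih' := ih htail fun f hf => by have := hrel f hf; tauto
    rw [SimpleGraph.Walk.length_cons, Nat.even_add_one, ih']
    tauto

theorem IsBlossom.base_notMem {V : Type*} [DecidableEq V] {G : SimpleGraph V}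
    {M : Finset (Sym2 V)} {S : Finset V} (hS : ∀ u ∈ S, ∀ w ∈ S, ¬ G.Adj u w)
    (hMS : ∀ a b, s(a, b) ∈ M → (a ∈ S ↔ b ∉ S)) {b : V} {c : G.Walk b b}
    (hc : IsBlossom G M c) : b ∉ S := by
  obtain ⟨-, hodd, halt, -, hbase⟩ := hc
  intro hb
  have hhead : ∀ e ∈ c.edges.head?, (e ∈ M ↔ b ∉ S) := fun e he =>
    iff_of_false (hbase e (List.mem_of_mem_head? he) · (c.start_mem_of_mem_edges_head? he))
      (not_not.mpr hb)
  have := halt.mem_iff_even_length hS hMS hhead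
  exact Nat.not_even_iff_odd.mpr hodd (by tauto)

/-- If `G` contains an `M`-Jposy relative to some maximum matching `M`,
then `G` is not a König–Egerváry graph. -/
theorem stmt_3 {V : Type*} [DecidableEq V] [Fintype V] (G : SimpleGraph V)
    (M : Finset (Sym2 V)) (hM : IsMaxMatching G M)
    (h : ∃ (b₁ b₂ : V) (c₁ : G.Walk b₁ b₁) (c₂ : G.Walk b₂ b₂) (w : G.Walk b₁ b₂),
      IsJposy G M c₁ c₂ w) :
    ¬ IsKE G := by
  intro hKE
  obtain ⟨b₁, b₂, c₁, c₂, w, hc₁, hc₂, hodd, halt, ⟨e₁, he₁, he₁M⟩, -⟩ := h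
  obtain ⟨S, hS, hMS⟩ := hKE.exists_indep_mem_iff_notMem hM
  have hb₁ : b₁ ∉ S := hc₁.base_notMem hS hMS
  have hb₂ : b₂ ∉ S := hc₂.base_notMem hS hMS
  have hhead : ∀ e ∈ w.edges.head?, (e ∈ M ↔ b₁ ∉ S) := fun e he =>
    iff_of_true (Option.some_injective _ (he.symm.trans he₁) ▸ he₁M) hb₁
  have := halt.mem_iff_even_length hS hMS hhead
  exact hb₂ (this.mpr (by simpa [hb₁] using hodd))
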